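/- arXiv:1407.2507 — 4 statements merged into one kernel-verified Lean document; each statement's English description precedes it below -/
import Mathlib

section
/- Define μ^(n)_k = ∑_{p=0}^{k-1} (-1)^{k+p+1} · a^{k-1}(n,p) · C(k-1,p), with a^k(1,p) = 1/(k+1) and a^k(n+1,p) = ∑_{q=p}^{k} (1/(q+1))·a^k(n,q). Then μ^(2)_1 = 1 and, for k ≥ 2, μ^(2)_k = (-1)^{k+1}/(k(k-1)). -/
open Finset

lemma lemA (m : ℕ) (hm : 1 ≤ m) (q : ℕ) :
    ∑ p ∈ range (q+1), (-1:ℚ)^p * (m.choose p) = (-1:ℚ)^q * ((m-1).choose q) := by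
  obtain ⟨n, rfl⟩ := Nat.exists_eq_add_of_le hm
  induction q with
  | zero => simp
  | succ q ih =>
    rw [sum_range_succ, ih]
    simp only [Nat.add_sub_cancel_left] at *
    rw [show 1 + n = n + 1 by ring, Nat.choose_succ_succ n q]
    push_cast
    ring

lemma lemB (n : ℕ) : ∑ q ∈ range (n+1), (-1:ℚ)^q * (n.choose q) / ((q:ℚ)+1) = 1/((n:ℚ)+1) := by
  have hcast : ∀ q : ℕ, ((n:ℚ)+1) * ((-1:ℚ)^q * (n.choose q) / ((q:ℚ)+1))
      = (-1:ℚ)^q * ((n+1).choose (q+1)) := by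
    intro q
    have h := Nat.add_one_mul_choose_eq n q
    have h' : ((n:ℚ)+1) * (n.choose q) = ((n+1).choose (q+1)) * ((q:ℚ)+1) := by
      exact_mod_cast congrArg (Nat.cast : ℕ → ℚ) h
    have hq : ((q:ℚ)+1) ≠ 0 := by positivity
    field_simp
    ring_nf
    ring_nf at h'
    linear_combination h'
  have halt : ∑ j ∈ range (n+2), (-1:ℚ)^j * ((n+1).choose j) = 0 := by
    have := Int.alternating_sum_range_choose (n := n+1)
    have : ((∑ i ∈ range (n+2), (-1:ℤ)^i * ((n+1).choose i) : ℤ) : ℚ) = ((if n+1 = 0 then 1 else 0 : ℤ) : ℚ) := by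
      exact_mod_cast congrArg (Int.cast : ℤ → ℚ) this
    simpa using this
  have hsum : ∑ q ∈ range (n+1), (-1:ℚ)^q * ((n+1).choose (q+1)) = 1 := by
    have := sum_range_succ' (fun j => (-1:ℚ)^j * ((n+1).choose j)) (n+1)
    rw [this] at halt
    simp only [pow_succ, Nat.choose_zero_right] at halt
    have : ∑ q ∈ range (n+1), (-1:ℚ)^q * ((n+1).choose (q+1))
        = -∑ q ∈ range (n+1), (-1:ℚ)^q * (-1) * ((n+1).choose (q+1)) := by
      rw [← Finset.sum_neg_distrib]
      exact Finset.sum_congr rfl (fun x _ => by ring)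
    rw [this]
    norm_num at halt
    linarith
  have hne : ((n:ℚ)+1) ≠ 0 := by positivity
  have := congrArg (fun x => x / ((n:ℚ)+1)) hsum
  rw [← this, Finset.sum_div]
  refine Finset.sum_congr rfl (fun q _ => ?_)
  rw [eq_div_iff hne, ← hcast q]
  ring

/-- With `a k 1 p = 1/(k+1)` and `a k (n+1) p = ∑_{q=p}^{k} (1/(q+1))·a k n q`,
the scalar `μ^(2)_k = ∑_{p=0}^{k-1} (-1)^{k+p+1} a^{k-1}(2,p) C(k-1,p)` equals
`1` for `k = 1` and `(-1)^{k+1}/(k(k-1))` for `k ≥ 2`. -/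
theorem mu_two_loop (a : ℕ → ℕ → ℕ → ℚ)
    (hbase : ∀ k p : ℕ, p ≤ k → a k 1 p = 1 / ((k : ℚ) + 1))
    (hrec : ∀ k n p : ℕ, 1 ≤ n → p ≤ k →
      a k (n + 1) p = ∑ q ∈ Finset.Icc p k, (1 / ((q : ℚ) + 1)) * a k n q) :
    ∀ k : ℕ, 1 ≤ k →
      (∑ p ∈ Finset.range k, (-1 : ℚ) ^ (k + p + 1) * a (k - 1) 2 p * ((k - 1).choose p : ℚ))
        = if k = 1 then 1 else (-1 : ℚ) ^ (k + 1) / ((k : ℚ) * ((k : ℚ) - 1)) := by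
  intro k hk
  obtain ⟨m, rfl⟩ : ∃ m, k = m + 1 := ⟨k - 1, (Nat.succ_pred_eq_of_pos hk).symm⟩
  simp only [Nat.add_sub_cancel]
  -- rewrite a m 2 p
  have ha : ∀ p, p ≤ m → a m 2 p = ∑ q ∈ Finset.Icc p m, (1 / ((q:ℚ)+1)) * (1/((m:ℚ)+1)) := by
    intro p hp
    rw [hrec m 1 p le_rfl hp]
    refine Finset.sum_congr rfl (fun q hq => ?_)
    rw [hbase m q (Finset.mem_Icc.mp hq).2]
  have step1 : (∑ p ∈ Finset.range (m+1), (-1 : ℚ) ^ (m + 1 + p + 1) * a m 2 p * (m.choose p : ℚ))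
      = ∑ p ∈ Finset.range (m+1), ∑ q ∈ Finset.Icc p m,
          (-1:ℚ)^(m+p) * ((m.choose p : ℚ)) * (1/((q:ℚ)+1)) * (1/((m:ℚ)+1)) := by
    refine Finset.sum_congr rfl (fun p hp => ?_)
    rw [ha p (Nat.lt_succ_iff.mp (Finset.mem_range.mp hp))]
    rw [Finset.mul_sum, Finset.sum_mul]
    refine Finset.sum_congr rfl (fun q _ => ?_)
    have : (-1:ℚ)^(m+1+p+1) = (-1:ℚ)^(m+p) := by
      rw [show m+1+p+1 = (m+p)+2 by ring, pow_add]; norm_num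
    rw [this]; ring
  rw [step1]
  have step2 : (∑ p ∈ Finset.range (m+1), ∑ q ∈ Finset.Icc p m,
          (-1:ℚ)^(m+p) * ((m.choose p : ℚ)) * (1/((q:ℚ)+1)) * (1/((m:ℚ)+1)))
      = ∑ q ∈ Finset.range (m+1), ∑ p ∈ Finset.range (q+1),
          (-1:ℚ)^(m+p) * ((m.choose p : ℚ)) * (1/((q:ℚ)+1)) * (1/((m:ℚ)+1)) := by
    refine Finset.sum_comm' ?_
    intro p q
    simp only [Finset.mem_range, Finset.mem_Icc]
    omega
  rw [step2]
  rcases Nat.eq_zero_or_pos m with hm | hm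
  · subst hm; norm_num
  · have hm1 : m ≠ 0 := hm.ne'
    rw [if_neg (by omega : ¬ m + 1 = 1)]
    have inner : ∀ q : ℕ, (∑ p ∈ Finset.range (q+1),
        (-1:ℚ)^(m+p) * ((m.choose p : ℚ)) * (1/((q:ℚ)+1)) * (1/((m:ℚ)+1)))
        = (-1:ℚ)^m * (1/((q:ℚ)+1)) * (1/((m:ℚ)+1)) * ((-1:ℚ)^q * ((m-1).choose q)) := by
      intro q
      rw [← lemA m hm q, Finset.mul_sum]
      refine Finset.sum_congr rfl (fun p _ => ?_)
      rw [pow_add]; ring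
    simp only [inner]
    obtain ⟨n, rfl⟩ : ∃ n, m = n + 1 := ⟨m - 1, (Nat.succ_pred_eq_of_pos hm).symm⟩
    simp only [Nat.add_sub_cancel]
    push_cast
    have split : (∑ q ∈ Finset.range (n+1+1), (-1:ℚ)^(n+1) * (1/((q:ℚ)+1)) * (1/((n:ℚ)+1+1)) * ((-1:ℚ)^q * ((n.choose q) : ℚ)))
        = (-1:ℚ)^(n+1) * (1/((n:ℚ)+1+1)) * ∑ q ∈ Finset.range (n+1), (-1:ℚ)^q * ((n.choose q):ℚ) / ((q:ℚ)+1) := by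
      rw [Finset.sum_range_succ]
      simp only [Nat.choose_succ_self, Nat.cast_zero, mul_zero, add_zero]
      rw [Finset.mul_sum]
      refine Finset.sum_congr rfl (fun q _ => by ring)
    rw [split, lemB n]
    have h1 : ((n:ℚ)+1) ≠ 0 := by positivity
    have h2 : ((n:ℚ)+1+1) ≠ 0 := by positivity
    have hs : (-1:ℚ)^(n+1+1+1) = (-1:ℚ)^(n+1) := by
      rw [show n+1+1+1 = (n+1)+2 by ring, pow_add]; norm_num
    rw [hs]
    field_simp
    ring
end

section
/- For each half-integer l and admissible indices m, n, the polynomial t^l_{n,m}(Z), defined as the coefficient of s^{l-n} in (s z₁₁ + z₂₁)^{l-m}(s z₁₂ + z₂₂)^{l+m}, is harmonic: it is annihilated by the operator □ = ∂²/∂z₁₁∂z₂₂ - ∂²/∂z₁₂∂z₂₁. -/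
open MvPolynomial

/-- The matrix coefficient polynomial `t^l_{n,m}(Z)`, encoded by natural numbers
`a = l - m`, `b = l + m`, `j = l - n`: the coefficient of `s^j` in
`(s z₁₁ + z₂₁)^a (s z₁₂ + z₂₂)^b`, in the variables `z₁₁, z₁₂, z₂₁, z₂₂ = 0,1,2,3`. -/
noncomputable def matrixCoeffPoly (a b j : ℕ) : MvPolynomial (Fin 4) ℂ :=
  Polynomial.coeff
    ((Polynomial.C (X 2 : MvPolynomial (Fin 4) ℂ) + Polynomial.C (X 0) * Polynomial.X) ^ a *
     (Polynomial.C (X 3) + Polynomial.C (X 1) * Polynomial.X) ^ b) j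

noncomputable abbrev Rg := MvPolynomial (Fin 4) ℂ

/-- Coefficientwise extension of `pderiv i` to `R[X]`. -/
noncomputable def Dv (i : Fin 4) (p : Polynomial Rg) : Polynomial Rg :=
  p.sum fun n c => Polynomial.monomial n (pderiv i c)

lemma Dv_coeff (i : Fin 4) (p : Polynomial Rg) (j : ℕ) :
    (Dv i p).coeff j = pderiv i (p.coeff j) := by
  rw [Dv, Polynomial.coeff_sum]
  simp only [Polynomial.coeff_monomial]
  rw [Polynomial.sum_def]
  rw [Finset.sum_eq_single j]
  · simp
  · intro n _ hn; simp [hn]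
  · intro h
    simp [Polynomial.notMem_support_iff.mp h]

lemma Dv_add (i : Fin 4) (p q : Polynomial Rg) : Dv i (p + q) = Dv i p + Dv i q := by
  rw [Dv, Polynomial.sum_add_index] <;> simp [Dv]

lemma Dv_zero (i : Fin 4) : Dv i 0 = 0 := by simp [Dv]

lemma Dv_monomial (i : Fin 4) (n : ℕ) (c : Rg) :
    Dv i (Polynomial.monomial n c) = Polynomial.monomial n (pderiv i c) := by
  rw [Dv, Polynomial.sum_monomial_index]; simp

lemma Dv_one (i : Fin 4) : Dv i 1 = 0 := by
  rw [← Polynomial.C_1, ← Polynomial.monomial_zero_left, Dv_monomial]; simp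

lemma Dv_nsmul (i : Fin 4) (n : ℕ) (p : Polynomial Rg) : Dv i (n • p) = n • Dv i p := by
  induction n with
  | zero => simp [Dv_zero]
  | succ n ih => rw [succ_nsmul, succ_nsmul, Dv_add, ih]

lemma Dv_mul (i : Fin 4) (p q : Polynomial Rg) :
    Dv i (p * q) = Dv i p * q + p * Dv i q := by
  induction p using Polynomial.induction_on' with
  | add p₁ p₂ h1 h2 => simp [add_mul, Dv_add, h1, h2]; ring
  | monomial n c =>
    induction q using Polynomial.induction_on' with
    | add q₁ q₂ h1 h2 => simp [mul_add, Dv_add, h1, h2]; ring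
    | monomial m d =>
      simp [Polynomial.monomial_mul_monomial, Dv_monomial, pderiv_mul, mul_comm, mul_add,
        add_comm]

lemma Dv_pow (i : Fin 4) (p : Polynomial Rg) (n : ℕ) :
    Dv i (p ^ n) = n • (p ^ (n - 1) * Dv i p) := by
  induction n with
  | zero => simp [Dv_one]
  | succ n ih =>
    rw [pow_succ, Dv_mul, ih]
    cases n with
    | zero => simp
    | succ n => simp only [Nat.succ_sub_one]; ring

noncomputable def uu : Polynomial Rg :=
  Polynomial.C (X 2 : Rg) + Polynomial.C (X 0) * Polynomial.X
noncomputable def vv : Polynomial Rg :=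
  Polynomial.C (X 3 : Rg) + Polynomial.C (X 1) * Polynomial.X

lemma uu_eq : uu = Polynomial.monomial 0 (X 2 : Rg) + Polynomial.monomial 1 (X 0) := by
  simp [uu, ← Polynomial.C_mul_X_pow_eq_monomial (n := 1), pow_one]

lemma vv_eq : vv = Polynomial.monomial 0 (X 3 : Rg) + Polynomial.monomial 1 (X 1) := by
  simp [vv, ← Polynomial.C_mul_X_pow_eq_monomial (n := 1), pow_one]

lemma Dv0_uu : Dv 0 uu = Polynomial.monomial 1 1 := by
  rw [uu_eq, Dv_add, Dv_monomial, Dv_monomial]; simp [pderiv_X]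
lemma Dv2_uu : Dv 2 uu = Polynomial.monomial 0 1 := by
  rw [uu_eq, Dv_add, Dv_monomial, Dv_monomial]; simp [pderiv_X]
lemma Dv1_uu : Dv 1 uu = 0 := by
  rw [uu_eq, Dv_add, Dv_monomial, Dv_monomial]; simp [pderiv_X]
lemma Dv3_uu : Dv 3 uu = 0 := by
  rw [uu_eq, Dv_add, Dv_monomial, Dv_monomial]; simp [pderiv_X]
lemma Dv1_vv : Dv 1 vv = Polynomial.monomial 1 1 := by
  rw [vv_eq, Dv_add, Dv_monomial, Dv_monomial]; simp [pderiv_X]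
lemma Dv3_vv : Dv 3 vv = Polynomial.monomial 0 1 := by
  rw [vv_eq, Dv_add, Dv_monomial, Dv_monomial]; simp [pderiv_X]
lemma Dv0_vv : Dv 0 vv = 0 := by
  rw [vv_eq, Dv_add, Dv_monomial, Dv_monomial]; simp [pderiv_X]
lemma Dv2_vv : Dv 2 vv = 0 := by
  rw [vv_eq, Dv_add, Dv_monomial, Dv_monomial]; simp [pderiv_X]

lemma key (a b : ℕ) :
    Dv 0 (Dv 3 (uu ^ a * vv ^ b)) = Dv 1 (Dv 2 (uu ^ a * vv ^ b)) := by
  have h3 : Dv 3 (uu ^ a * vv ^ b) = b • (uu ^ a * vv ^ (b - 1)) := by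
    rw [Dv_mul, Dv_pow, Dv_pow, Dv3_uu, Dv3_vv]
    simp [mul_smul_comm]
    ring
  have h2 : Dv 2 (uu ^ a * vv ^ b) = a • (uu ^ (a - 1) * vv ^ b) := by
    rw [Dv_mul, Dv_pow, Dv_pow, Dv2_uu, Dv2_vv]
    simp [smul_mul_assoc]
    ring
  rw [h3, h2, Dv_nsmul, Dv_nsmul, Dv_mul, Dv_mul, Dv_pow, Dv_pow, Dv_pow, Dv_pow,
    Dv0_uu, Dv0_vv, Dv1_uu, Dv1_vv]
  simp only [mul_zero, zero_mul, smul_zero, add_zero, zero_add]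
  simp only [smul_mul_assoc, mul_smul_comm, smul_smul]
  rw [Nat.mul_comm]
  congr 1
  ring

/-- Each matrix coefficient polynomial `t^l_{n,m}` is harmonic: it is annihilated by
`□ = ∂²/∂z₁₁∂z₂₂ - ∂²/∂z₁₂∂z₂₁`. -/
theorem matrixCoeffPoly_harmonic (a b j : ℕ) :
    pderiv 0 (pderiv 3 (matrixCoeffPoly a b j))
      - pderiv 1 (pderiv 2 (matrixCoeffPoly a b j)) = 0 := by
  have hm : matrixCoeffPoly a b j = (uu ^ a * vv ^ b).coeff j := rfl
  rw [hm, ← Dv_coeff, ← Dv_coeff, ← Dv_coeff, ← Dv_coeff, key, sub_self]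
end

section
/- The matrix coefficient polynomials t^l_{n,m}(Z) (l ∈ {0, 1/2, 1, 3/2, ...}, m, n ∈ ℤ + l, -l ≤ m, n ≤ l) are linearly independent over ℂ as polynomials in z₁₁, z₁₂, z₂₁, z₂₂. -/
open MvPolynomial

lemma coeff_CC {R : Type*} [CommSemiring R] (u v : R) (n i : ℕ) :
    ((Polynomial.C u + Polynomial.C v * Polynomial.X) ^ n).coeff i
      = n.choose i * (u ^ (n - i) * v ^ i) := by
  rw [add_comm, add_pow, Polynomial.finset_sum_coeff]
  have hterm : ∀ k, ((Polynomial.C v * Polynomial.X) ^ k * Polynomial.C u ^ (n - k)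
      * (n.choose k : Polynomial R)).coeff i
      = if i = k then (n.choose k : R) * (u ^ (n - k) * v ^ k) else 0 := by
    intro k
    have h2 : (Polynomial.C v * Polynomial.X) ^ k * Polynomial.C u ^ (n - k)
        * (n.choose k : Polynomial R)
        = Polynomial.C ((n.choose k : R) * (u ^ (n - k) * v ^ k)) * Polynomial.X ^ k := by
      rw [← Polynomial.C_eq_natCast, mul_pow, ← Polynomial.C_pow, ← Polynomial.C_pow,
        Polynomial.C_mul, Polynomial.C_mul]
      ring
    rw [h2, Polynomial.coeff_C_mul, Polynomial.coeff_X_pow]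
    by_cases h : i = k <;> simp [h]
  simp only [hterm]
  rw [Finset.sum_ite_eq (Finset.range (n + 1))]
  by_cases h : i ≤ n
  · rw [if_pos (Finset.mem_range.mpr (Nat.lt_succ_of_le h))]
  · push_neg at h
    rw [if_neg (by simp [Nat.lt_succ_iff]; omega), Nat.choose_eq_zero_of_lt h]
    simp

noncomputable def mon (a b i k : ℕ) : Fin 4 →₀ ℕ :=
  Finsupp.single 0 i + Finsupp.single 1 k + Finsupp.single 2 (a - i) + Finsupp.single 3 (b - k)

lemma matrixCoeffPoly_eq (a b j : ℕ) :
    matrixCoeffPoly a b j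
      = ∑ p ∈ Finset.HasAntidiagonal.antidiagonal j,
          monomial (mon a b p.1 p.2) ((a.choose p.1 : ℂ) * b.choose p.2) := by
  unfold matrixCoeffPoly
  rw [Polynomial.coeff_mul]
  refine Finset.sum_congr rfl fun p _ => ?_
  rw [coeff_CC, coeff_CC]
  rw [X_pow_eq_monomial, X_pow_eq_monomial, X_pow_eq_monomial, X_pow_eq_monomial]
  have h1 : ((a.choose p.1 : MvPolynomial (Fin 4) ℂ)) = C (a.choose p.1 : ℂ) := by simp
  have h2 : ((b.choose p.2 : MvPolynomial (Fin 4) ℂ)) = C (b.choose p.2 : ℂ) := by simp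
  rw [h1, h2]
  simp only [monomial_mul, C_mul_monomial, mul_one]
  rw [monomial_eq_monomial_iff]
  left
  constructor
  · unfold mon; abel
  · ring

lemma mon_inj {a b i k a' b' i' k' : ℕ} (hi : i ≤ a) (hk : k ≤ b) (hi' : i' ≤ a')
    (hk' : k' ≤ b') (h : mon a b i k = mon a' b' i' k') :
    a = a' ∧ b = b' ∧ i = i' ∧ k = k' := by
  have h0 := DFunLike.congr_fun h 0
  have h1 := DFunLike.congr_fun h 1
  have h2 := DFunLike.congr_fun h 2
  have h3 := DFunLike.congr_fun h 3
  simp [mon, Finsupp.single_apply] at h0 h1 h2 h3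
  omega

/-- The matrix coefficient polynomials `t^l_{n,m}` (over all admissible indices
`l, m, n`, i.e. all triples `(a, b, j)` with `j ≤ a + b`) are linearly independent
over `ℂ` as polynomials in `z₁₁, z₁₂, z₂₁, z₂₂`. -/
theorem matrixCoeffPoly_linearIndependent :
    LinearIndependent ℂ
      (fun x : {x : ℕ × ℕ × ℕ // x.2.2 ≤ x.1 + x.2.1} =>
        matrixCoeffPoly x.1.1 x.1.2.1 x.1.2.2) := by
  rw [linearIndependent_iff']
  rintro s g hsum ⟨⟨a, b, j⟩, hj⟩ hx
  simp only at hj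
  set i0 := min j a with hi0
  set k0 := j - i0 with hk0
  have hi0a : i0 ≤ a := min_le_right _ _
  have hik : i0 + k0 = j := by omega
  have hk0b : k0 ≤ b := by omega
  have hc := congrArg (MvPolynomial.coeff (mon a b i0 k0)) hsum
  rw [MvPolynomial.coeff_sum, MvPolynomial.coeff_zero] at hc
  have key : ∀ y : {x : ℕ × ℕ × ℕ // x.2.2 ≤ x.1 + x.2.1},
      MvPolynomial.coeff (mon a b i0 k0) (matrixCoeffPoly y.1.1 y.1.2.1 y.1.2.2)
        = if y = ⟨(a, b, j), hj⟩ then (a.choose i0 : ℂ) * b.choose k0 else 0 := by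
    rintro ⟨⟨A, B, J⟩, hJ⟩
    rw [matrixCoeffPoly_eq, MvPolynomial.coeff_sum]
    simp only [MvPolynomial.coeff_monomial]
    by_cases hy : (⟨(A, B, J), hJ⟩ : {x : ℕ × ℕ × ℕ // x.2.2 ≤ x.1 + x.2.1}) = ⟨(a, b, j), hj⟩
    · rw [if_pos hy]
      obtain ⟨hA, hB, hJ'⟩ : A = a ∧ B = b ∧ J = j := by
        simpa [Prod.ext_iff] using Subtype.ext_iff.mp hy
      subst hA; subst hB; subst hJ'
      rw [Finset.sum_eq_single (i0, k0)]
      · simp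
      · rintro ⟨i, k⟩ hp hne
        simp only [Finset.HasAntidiagonal.mem_antidiagonal] at hp
        by_cases hia : i ≤ A
        · by_cases hkb : k ≤ B
          · rw [if_neg]
            intro hmon
            obtain ⟨_, _, rfl, rfl⟩ := mon_inj hia hkb hi0a hk0b hmon
            exact absurd rfl hne
          · push_neg at hkb
            simp [Nat.choose_eq_zero_of_lt hkb]
        · push_neg at hia
          simp [Nat.choose_eq_zero_of_lt hia]
      · intro h
        exact absurd (by simp [hik]) h
    · rw [if_neg hy]
      refine Finset.sum_eq_zero ?_
      rintro ⟨i, k⟩ hp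
      simp only [Finset.HasAntidiagonal.mem_antidiagonal] at hp
      by_cases hia : i ≤ A
      · by_cases hkb : k ≤ B
        · rw [if_neg]
          intro hmon
          obtain ⟨rfl, rfl, rfl, rfl⟩ := mon_inj hia hkb hi0a hk0b hmon
          exact hy (by simp [← hp, hik])
        · push_neg at hkb
          simp [Nat.choose_eq_zero_of_lt hkb]
      · push_neg at hia
        simp [Nat.choose_eq_zero_of_lt hia]
  simp only [MvPolynomial.coeff_smul, smul_eq_mul, key] at hc
  rw [Finset.sum_eq_single (⟨(a, b, j), hj⟩ : {x : ℕ × ℕ × ℕ // x.2.2 ≤ x.1 + x.2.1})] at hc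
  · simp only [if_pos rfl] at hc
    have h1 : (a.choose i0 : ℂ) ≠ 0 := Nat.cast_ne_zero.mpr (Nat.choose_pos hi0a).ne'
    have h2 : (b.choose k0 : ℂ) ≠ 0 := Nat.cast_ne_zero.mpr (Nat.choose_pos hk0b).ne'
    exact (mul_eq_zero.mp hc).resolve_right (mul_ne_zero h1 h2)
  · intro y _ hne
    rw [if_neg hne, mul_zero]
  · intro h
    exact absurd hx h
end

section
/- Let N(Z) = det Z on M₂(ℂ) and for a half-integer l and indices m, n let t^l_{n,m}(Z) be the coefficient of s^{l-n} in (s z₁₁ + z₂₁)^{l-m}(s z₁₂ + z₂₂)^{l+m}. Then for invertible Z, the function t^l_{n,m}(Z⁻¹)·N(Z)^{-1} equals N(Z)^{-(2l+1)} times a harmonic polynomial; in particular, t^l_{n,m}(Z⁻¹)·N(Z)^{-1} is annihilated by □ = ∂²/∂z₁₁∂z₂₂ - ∂²/∂z₁₂∂z₂₁ on the open set N(Z) ≠ 0. -/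
set_option maxRecDepth 8000

open MvPolynomial

/-- The matrix coefficient function `t^l_{n,m}(Z)`, encoded by `a = l - m`,
`b = l + m`, `j = l - n`: the coefficient of `s^j` in
`(s z₁₁ + z₂₁)^a (s z₁₂ + z₂₂)^b`, as a function of the entries. -/
noncomputable def tFun (a b j : ℕ) (z11 z12 z21 z22 : ℂ) : ℂ :=
  Polynomial.coeff
    ((Polynomial.C z21 + Polynomial.C z11 * Polynomial.X) ^ a *
     (Polynomial.C z22 + Polynomial.C z12 * Polynomial.X) ^ b) j

/-- Partial derivative of a function of four complex variables along the `i`-th one. -/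
noncomputable def pd (i : Fin 4) (f : (Fin 4 → ℂ) → ℂ) : (Fin 4 → ℂ) → ℂ :=
  fun x => deriv (fun t => f (Function.update x i t)) (x i)

namespace TFunAux

open Finsupp

/-! ### Monomial calculus on `MvPolynomial (Fin 4) ℂ` -/

noncomputable def mon (e0 e1 e2 e3 : ℕ) (c : ℂ) : MvPolynomial (Fin 4) ℂ :=
  monomial (single 0 e0 + single 1 e1 + single 2 e2 + single 3 e3) c

lemma eval_mon (e0 e1 e2 e3 : ℕ) (c : ℂ) (y : Fin 4 → ℂ) :
    eval y (mon e0 e1 e2 e3 c) = c * y 0 ^ e0 * y 1 ^ e1 * y 2 ^ e2 * y 3 ^ e3 := by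
  simp [mon, eval_monomial, Finsupp.prod_add_index, Finsupp.prod_single_index, pow_add]
  ring

lemma mon_zero (e0 e1 e2 e3 : ℕ) : mon e0 e1 e2 e3 0 = 0 := by
  simp [mon]

lemma pderiv_mon_0 (e0 e1 e2 e3 : ℕ) (c : ℂ) :
    pderiv 0 (mon e0 e1 e2 e3 c) = mon (e0 - 1) e1 e2 e3 (c * e0) := by
  rw [mon, pderiv_monomial]
  have hs : (single 0 e0 + single 1 e1 + single 2 e2 + single 3 e3 : Fin 4 →₀ ℕ) - single 0 1
      = single (0 : Fin 4) (e0 - 1) + single 1 e1 + single 2 e2 + single 3 e3 := by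
    ext i; fin_cases i <;> simp [Finsupp.single_apply]
  have hc : (single 0 e0 + single 1 e1 + single 2 e2 + single 3 e3 : Fin 4 →₀ ℕ) (0 : Fin 4) = e0 := by
    simp [Finsupp.single_apply]
  rw [hs, hc]; rfl

lemma pderiv_mon_1 (e0 e1 e2 e3 : ℕ) (c : ℂ) :
    pderiv 1 (mon e0 e1 e2 e3 c) = mon e0 (e1 - 1) e2 e3 (c * e1) := by
  rw [mon, pderiv_monomial]
  have hs : (single 0 e0 + single 1 e1 + single 2 e2 + single 3 e3 : Fin 4 →₀ ℕ) - single 1 1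
      = single 0 e0 + single (1 : Fin 4) (e1 - 1) + single 2 e2 + single 3 e3 := by
    ext i; fin_cases i <;> simp [Finsupp.single_apply]
  have hc : (single 0 e0 + single 1 e1 + single 2 e2 + single 3 e3 : Fin 4 →₀ ℕ) (1 : Fin 4) = e1 := by
    simp [Finsupp.single_apply]
  rw [hs, hc]; rfl

lemma pderiv_mon_2 (e0 e1 e2 e3 : ℕ) (c : ℂ) :
    pderiv 2 (mon e0 e1 e2 e3 c) = mon e0 e1 (e2 - 1) e3 (c * e2) := by
  rw [mon, pderiv_monomial]
  have hs : (single 0 e0 + single 1 e1 + single 2 e2 + single 3 e3 : Fin 4 →₀ ℕ) - single 2 1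
      = single 0 e0 + single 1 e1 + single (2 : Fin 4) (e2 - 1) + single 3 e3 := by
    ext i; fin_cases i <;> simp [Finsupp.single_apply]
  have hc : (single 0 e0 + single 1 e1 + single 2 e2 + single 3 e3 : Fin 4 →₀ ℕ) (2 : Fin 4) = e2 := by
    simp [Finsupp.single_apply]
  rw [hs, hc]; rfl

lemma pderiv_mon_3 (e0 e1 e2 e3 : ℕ) (c : ℂ) :
    pderiv 3 (mon e0 e1 e2 e3 c) = mon e0 e1 e2 (e3 - 1) (c * e3) := by
  rw [mon, pderiv_monomial]
  have hs : (single 0 e0 + single 1 e1 + single 2 e2 + single 3 e3 : Fin 4 →₀ ℕ) - single 3 1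
      = single 0 e0 + single 1 e1 + single 2 e2 + single (3 : Fin 4) (e3 - 1) := by
    ext i; fin_cases i <;> simp [Finsupp.single_apply]
  have hc : (single 0 e0 + single 1 e1 + single 2 e2 + single 3 e3 : Fin 4 →₀ ℕ) (3 : Fin 4) = e3 := by
    simp [Finsupp.single_apply]
  rw [hs, hc]; rfl

lemma X_mul_mon_0 (e0 e1 e2 e3 : ℕ) (c : ℂ) :
    (X 0 : MvPolynomial (Fin 4) ℂ) * mon e0 e1 e2 e3 c = mon (e0 + 1) e1 e2 e3 c := by
  rw [mon, mon, X, monomial_mul, one_mul]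
  have hs : (single (0 : Fin 4) 1) + (single 0 e0 + single 1 e1 + single 2 e2 + single 3 e3 : Fin 4 →₀ ℕ)
      = single (0 : Fin 4) (e0 + 1) + single 1 e1 + single 2 e2 + single 3 e3 := by
    ext i; fin_cases i <;> simp [Finsupp.single_apply] <;> omega
  rw [hs]

lemma X_mul_mon_1 (e0 e1 e2 e3 : ℕ) (c : ℂ) :
    (X 1 : MvPolynomial (Fin 4) ℂ) * mon e0 e1 e2 e3 c = mon e0 (e1 + 1) e2 e3 c := by
  rw [mon, mon, X, monomial_mul, one_mul]
  have hs : (single (1 : Fin 4) 1) + (single 0 e0 + single 1 e1 + single 2 e2 + single 3 e3 : Fin 4 →₀ ℕ)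
      = single (0 : Fin 4) e0 + single 1 (e1 + 1) + single 2 e2 + single 3 e3 := by
    ext i; fin_cases i <;> simp [Finsupp.single_apply] <;> omega
  rw [hs]

lemma X_mul_mon_2 (e0 e1 e2 e3 : ℕ) (c : ℂ) :
    (X 2 : MvPolynomial (Fin 4) ℂ) * mon e0 e1 e2 e3 c = mon e0 e1 (e2 + 1) e3 c := by
  rw [mon, mon, X, monomial_mul, one_mul]
  have hs : (single (2 : Fin 4) 1) + (single 0 e0 + single 1 e1 + single 2 e2 + single 3 e3 : Fin 4 →₀ ℕ)
      = single (0 : Fin 4) e0 + single 1 e1 + single 2 (e2 + 1) + single 3 e3 := by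
    ext i; fin_cases i <;> simp [Finsupp.single_apply] <;> omega
  rw [hs]

lemma X_mul_mon_3 (e0 e1 e2 e3 : ℕ) (c : ℂ) :
    (X 3 : MvPolynomial (Fin 4) ℂ) * mon e0 e1 e2 e3 c = mon e0 e1 e2 (e3 + 1) c := by
  rw [mon, mon, X, monomial_mul, one_mul]
  have hs : (single (3 : Fin 4) 1) + (single 0 e0 + single 1 e1 + single 2 e2 + single 3 e3 : Fin 4 →₀ ℕ)
      = single (0 : Fin 4) e0 + single 1 e1 + single 2 e2 + single 3 (e3 + 1) := by
    ext i; fin_cases i <;> simp [Finsupp.single_apply] <;> omega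
  rw [hs]

/-! ### The harmonic polynomial `hP` -/

noncomputable def cc (a b j k : ℕ) : ℂ :=
  (-1)^(a-k) * (-1)^(j-k) * (a.choose k) * (b.choose (j-k))

noncomputable def hP (a b j : ℕ) : MvPolynomial (Fin 4) ℂ :=
  ∑ k ∈ Finset.range (j+1), mon (b-(j-k)) (j-k) (a-k) k (cc a b j k)

lemma cc_zero_of_lt {a b j k : ℕ} (h : a < k ∨ b < j - k) : cc a b j k = 0 := by
  rcases h with h | h <;> simp [cc, Nat.choose_eq_zero_of_lt h]

lemma step (a b j k : ℕ) (hk : k < j) :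
    mon (b-(j-(k+1))-1) (j-(k+1)) (a-(k+1)) ((k+1)-1)
      (cc a b j (k+1) * ((k+1 : ℕ) : ℂ) * ((b-(j-(k+1)) : ℕ) : ℂ)) =
    mon (b-(j-k)) ((j-k)-1) ((a-k)-1) k (cc a b j k * ((a-k : ℕ) : ℂ) * ((j-k : ℕ) : ℂ)) := by
  have E0 : b-(j-(k+1))-1 = b-(j-k) := by omega
  have E1 : j-(k+1) = (j-k)-1 := by omega
  have E2 : a-(k+1) = (a-k)-1 := by omega
  have E3 : (k+1)-1 = k := by omega
  rw [E0, E1, E2, E3]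
  congr 1
  rcases le_or_gt a k with hak | hak
  · have h1 : a.choose (k+1) = 0 := Nat.choose_eq_zero_of_lt (by omega)
    have h2 : (a - k : ℕ) = 0 ∨ a.choose k = 0 := by
      rcases eq_or_lt_of_le hak with h | h
      · left; omega
      · right; exact Nat.choose_eq_zero_of_lt h
    rcases h2 with h2 | h2 <;> simp [cc, h1, h2]
  · have h1 : a - k = (a - (k+1)) + 1 := by omega
    have h2 : j - k = (j - (k+1)) + 1 := by omega
    have c1 : ((a.choose (k+1) * (k+1) : ℕ) : ℂ) = ((a.choose k * (a - k) : ℕ) : ℂ) := by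
      rw [Nat.choose_succ_right_eq]
    have c2 : ((b.choose ((j-(k+1))+1) * ((j-(k+1))+1) : ℕ) : ℂ)
        = ((b.choose (j-(k+1)) * (b - (j-(k+1))) : ℕ) : ℂ) := by
      rw [Nat.choose_succ_right_eq]
    rw [cc, cc, h1, h2]
    push_cast at c1 c2 ⊢
    rw [h1] at c1; push_cast at c1
    linear_combination (((-1:ℂ)^(a-(k+1)) * (-1)^(j-(k+1))) * (b.choose (j-(k+1)) : ℂ)
        * ((b - (j-(k+1)) : ℕ) : ℂ)) * c1
      - (((-1:ℂ)^(a-(k+1)) * (-1)^(j-(k+1))) * (a.choose k : ℂ)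
        * (((a - (k+1) : ℕ) : ℂ) + 1)) * c2

lemma box_hP (a b j : ℕ) :
    pderiv 0 (pderiv 3 (hP a b j)) - pderiv 1 (pderiv 2 (hP a b j)) = 0 := by
  rw [sub_eq_zero, hP, map_sum, map_sum, map_sum, map_sum]
  simp only [pderiv_mon_3, pderiv_mon_0, pderiv_mon_2, pderiv_mon_1]
  rw [Finset.sum_range_succ', Finset.sum_range_succ]
  simp only [Nat.cast_zero, mul_zero, zero_mul, mon_zero, add_zero, Nat.sub_self, Nat.cast_ofNat]
  refine Finset.sum_congr rfl fun k hk => ?_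
  have hkj : k < j := Finset.mem_range.mp hk
  simpa using step a b j k hkj

lemma X_pderiv_mon_0 (e0 e1 e2 e3 : ℕ) (c : ℂ) :
    (X 0 : MvPolynomial (Fin 4) ℂ) * pderiv 0 (mon e0 e1 e2 e3 c) = mon e0 e1 e2 e3 (c * e0) := by
  cases e0 with
  | zero => simp [pderiv_mon_0, mon_zero]
  | succ n => rw [pderiv_mon_0, X_mul_mon_0]; simp

lemma X_pderiv_mon_1 (e0 e1 e2 e3 : ℕ) (c : ℂ) :
    (X 1 : MvPolynomial (Fin 4) ℂ) * pderiv 1 (mon e0 e1 e2 e3 c) = mon e0 e1 e2 e3 (c * e1) := by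
  cases e1 with
  | zero => simp [pderiv_mon_1, mon_zero]
  | succ n => rw [pderiv_mon_1, X_mul_mon_1]; simp

lemma X_pderiv_mon_2 (e0 e1 e2 e3 : ℕ) (c : ℂ) :
    (X 2 : MvPolynomial (Fin 4) ℂ) * pderiv 2 (mon e0 e1 e2 e3 c) = mon e0 e1 e2 e3 (c * e2) := by
  cases e2 with
  | zero => simp [pderiv_mon_2, mon_zero]
  | succ n => rw [pderiv_mon_2, X_mul_mon_2]; simp

lemma X_pderiv_mon_3 (e0 e1 e2 e3 : ℕ) (c : ℂ) :
    (X 3 : MvPolynomial (Fin 4) ℂ) * pderiv 3 (mon e0 e1 e2 e3 c) = mon e0 e1 e2 e3 (c * e3) := by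
  cases e3 with
  | zero => simp [pderiv_mon_3, mon_zero]
  | succ n => rw [pderiv_mon_3, X_mul_mon_3]; simp

lemma mon_add_same (e0 e1 e2 e3 : ℕ) (c c' : ℂ) :
    mon e0 e1 e2 e3 c + mon e0 e1 e2 e3 c' = mon e0 e1 e2 e3 (c + c') := by
  rw [mon, mon, mon, ← map_add]

lemma natCast_mul_mon (n : ℕ) (e0 e1 e2 e3 : ℕ) (c : ℂ) :
    ((n : ℕ) : MvPolynomial (Fin 4) ℂ) * mon e0 e1 e2 e3 c = mon e0 e1 e2 e3 ((n : ℂ) * c) := by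
  rw [← map_natCast (C : ℂ →+* MvPolynomial (Fin 4) ℂ), mon, mon, C_mul_monomial]

lemma euler_hP (a b j : ℕ) :
    X 0 * pderiv 0 (hP a b j) + X 1 * pderiv 1 (hP a b j) + X 2 * pderiv 2 (hP a b j)
      + X 3 * pderiv 3 (hP a b j) = ((a + b : ℕ) : MvPolynomial (Fin 4) ℂ) * hP a b j := by
  rw [hP]
  simp only [map_sum, Finset.mul_sum, X_pderiv_mon_0, X_pderiv_mon_1, X_pderiv_mon_2,
    X_pderiv_mon_3]
  rw [← Finset.sum_add_distrib, ← Finset.sum_add_distrib, ← Finset.sum_add_distrib]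
  refine Finset.sum_congr rfl fun k hk => ?_
  have hkj : k ≤ j := by have := Finset.mem_range.mp hk; omega
  rw [mon_add_same, mon_add_same, mon_add_same, natCast_mul_mon]
  rcases le_or_gt k a with hka | hka
  · rcases le_or_gt (j - k) b with hjb | hjb
    · have hsum : ((b-(j-k)) + (j-k) + (a-k) + k : ℕ) = a + b := by omega
      congr 1
      have : ((b-(j-k) : ℕ) : ℂ) + ((j-k : ℕ) : ℂ) + ((a-k : ℕ) : ℂ) + ((k : ℕ) : ℂ)
          = ((a + b : ℕ) : ℂ) := by
        rw [← hsum]; push_cast; ring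
      linear_combination cc a b j k * this
    · rw [cc_zero_of_lt (Or.inr hjb)]; congr 1; ring
  · rw [cc_zero_of_lt (Or.inl hka)]; congr 1; ring

/-! ### The rational-function calculus -/

noncomputable def Np : MvPolynomial (Fin 4) ℂ := X 0 * X 3 - X 1 * X 2

noncomputable def Rnext (p : MvPolynomial (Fin 4) ℂ) (m : ℕ) (i : Fin 4) :
    MvPolynomial (Fin 4) ℂ :=
  Np * pderiv i p - (m : MvPolynomial (Fin 4) ℂ) * (pderiv i Np * p)

lemma pderiv_natCast (i : Fin 4) (n : ℕ) :
    pderiv i ((n : ℕ) : MvPolynomial (Fin 4) ℂ) = 0 := by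
  rw [← map_natCast (C : ℂ →+* MvPolynomial (Fin 4) ℂ)]; exact pderiv_C

lemma pderiv_Np_0 : pderiv 0 Np = X 3 := by
  simp [Np, pderiv_mul]
lemma pderiv_Np_1 : pderiv 1 Np = -(X 2) := by
  simp [Np, pderiv_mul]
lemma pderiv_Np_2 : pderiv 2 Np = -(X 1) := by
  simp [Np, pderiv_mul]
lemma pderiv_Np_3 : pderiv 3 Np = X 0 := by
  simp [Np, pderiv_mul]

lemma key (a b j : ℕ) :
    Rnext (Rnext (hP a b j) (a+b+1) 3) ((a+b+1)+1) 0
      - Rnext (Rnext (hP a b j) (a+b+1) 2) ((a+b+1)+1) 1 = 0 := by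
  have E1 := box_hP a b j
  have E2 := euler_hP a b j
  simp only [Rnext, map_sub, pderiv_mul, pderiv_Np_0, pderiv_Np_1, pderiv_Np_2, pderiv_Np_3,
    pderiv_natCast, zero_mul, mul_zero]
  simp only [Np, map_neg, pderiv_X_self]
  push_cast [Nat.cast_add] at E2 ⊢
  linear_combination ((X 0 * X 3 - X 1 * X 2)^2) * E1
    - ((a : MvPolynomial (Fin 4) ℂ) + (b : MvPolynomial (Fin 4) ℂ) + 1)
      * (X 0 * X 3 - X 1 * X 2) * E2

/-! ### Explicit expansion of `tFun` and the core evaluation identity -/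

lemma coeff_linpow (u v : ℂ) : ∀ n k : ℕ,
    (((Polynomial.C u + Polynomial.C v * Polynomial.X))^n).coeff k
      = (n.choose k : ℂ) * u^(n-k) * v^k := by
  intro n
  induction n with
  | zero => intro k; cases k <;> simp [Polynomial.coeff_one]
  | succ n ih =>
    intro k
    have hsplit : (Polynomial.C u + Polynomial.C v * Polynomial.X)^(n+1)
        = ((Polynomial.C u + Polynomial.C v * Polynomial.X)^n) * Polynomial.C u
          + (((Polynomial.C u + Polynomial.C v * Polynomial.X)^n) * Polynomial.C v)
            * Polynomial.X := by ring
    rw [hsplit, Polynomial.coeff_add, Polynomial.coeff_mul_C]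
    cases k with
    | zero =>
      rw [Polynomial.coeff_mul_X_zero, ih]
      simp [pow_succ]
    | succ k =>
      rw [Polynomial.coeff_mul_X, Polynomial.coeff_mul_C, ih, ih]
      rcases le_or_gt (k+1) n with hkn | hkn
      · have h1 : n - k = (n - (k+1)) + 1 := by omega
        have h2 : (n+1) - (k+1) = (n - (k+1)) + 1 := by omega
        rw [h1, h2, Nat.choose_succ_succ]
        push_cast
        ring
      · have h0 : n.choose (k+1) = 0 := Nat.choose_eq_zero_of_lt hkn
        have h1 : n - k = 0 := by omega
        have h2 : (n+1) - (k+1) = 0 := by omega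
        rw [h0, h1, h2, Nat.choose_succ_succ, h0]
        push_cast
        ring

lemma tFun_eq (a b j : ℕ) (z11 z12 z21 z22 : ℂ) :
    tFun a b j z11 z12 z21 z22
      = ∑ k ∈ Finset.range (j+1), (a.choose k : ℂ) * (b.choose (j-k) : ℂ)
          * z21^(a-k) * z11^k * z22^(b-(j-k)) * z12^(j-k) := by
  rw [tFun, Polynomial.coeff_mul, Finset.Nat.sum_antidiagonal_eq_sum_range_succ_mk]
  refine Finset.sum_congr rfl fun k _ => ?_
  rw [coeff_linpow, coeff_linpow]
  ring

lemma core (a b j : ℕ) (y : Fin 4 → ℂ) (_hN : y 0 * y 3 - y 1 * y 2 ≠ 0) :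
    tFun a b j ((y 3) / (y 0 * y 3 - y 1 * y 2)) (-(y 1) / (y 0 * y 3 - y 1 * y 2))
        (-(y 2) / (y 0 * y 3 - y 1 * y 2)) ((y 0) / (y 0 * y 3 - y 1 * y 2))
        * (y 0 * y 3 - y 1 * y 2)⁻¹
      = eval y (hP a b j) * ((y 0 * y 3 - y 1 * y 2) ^ (a + b + 1))⁻¹ := by
  set D := y 0 * y 3 - y 1 * y 2 with hD
  rw [tFun_eq, hP, map_sum, Finset.sum_mul, Finset.sum_mul]
  refine Finset.sum_congr rfl fun k hk => ?_
  have hkj : k ≤ j := by have := Finset.mem_range.mp hk; omega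
  rw [eval_mon, cc]
  rcases le_or_gt k a with hka | hka
  · rcases le_or_gt (j-k) b with hjb | hjb
    · have hexp : a + b + 1 = (a-k) + (k + ((b-(j-k)) + ((j-k) + 1))) := by omega
      have n1 : (-(y 1)) = (-1 : ℂ) * y 1 := by ring
      have n2 : (-(y 2)) = (-1 : ℂ) * y 2 := by ring
      rw [hexp, ← inv_pow, n1, n2]
      simp only [div_eq_mul_inv, mul_pow, inv_pow, pow_add, pow_one]
      ring
    · rw [Nat.choose_eq_zero_of_lt hjb]
      push_cast; ring
  · rw [Nat.choose_eq_zero_of_lt hka]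
    push_cast; ring

/-! ### Analytic lemmas -/

lemma hasDerivAt_eval (p : MvPolynomial (Fin 4) ℂ) (i : Fin 4) (x : Fin 4 → ℂ) :
    HasDerivAt (fun t => eval (Function.update x i t) p) (eval x (pderiv i p)) (x i) := by
  induction p using MvPolynomial.induction_on with
  | C c => simpa [pderiv_C] using (hasDerivAt_const (x i) c)
  | add p q hp hq => simpa [map_add, Pi.add_def] using hp.add hq
  | mul_X p m hp =>
    by_cases him : m = i
    · subst him
      have h2 := hp.mul (hasDerivAt_id (x m))
      simp only [Pi.mul_def, id_eq, Function.update_eq_self, mul_one] at h2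
      have hfun : (fun y => eval (Function.update x m y) p * y)
          = fun t => eval (Function.update x m t) (p * X m) := by
        funext t; simp [Function.update_self]
      rw [hfun] at h2
      have hval : eval x (pderiv m (p * X m)) = eval x (pderiv m p) * x m + eval x p := by
        simp [pderiv_mul]; ring
      rw [hval]
      exact h2
    · have hfun : (fun t => eval (Function.update x i t) (p * X m))
          = fun t => eval (Function.update x i t) p * x m := by
        funext t; simp [Function.update_apply, him]
      rw [hfun]
      have hval : eval x (pderiv i (p * X m)) = eval x (pderiv i p) * x m := by
        simp [pderiv_mul, pderiv_X_of_ne him]; ring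
      rw [hval]
      exact hp.mul_const (x m)

def Nf (y : Fin 4 → ℂ) : ℂ := y 0 * y 3 - y 1 * y 2

lemma eval_Np (y : Fin 4 → ℂ) : eval y Np = Nf y := by simp [Np, Nf]

lemma pd_R (p : MvPolynomial (Fin 4) ℂ) (M : ℕ) (i : Fin 4) (x : Fin 4 → ℂ) (hN : Nf x ≠ 0) :
    pd i (fun y => eval y p * ((Nf y)^M)⁻¹) x
      = eval x (Rnext p M i) * ((Nf x)^(M+1))⁻¹ := by
  have hA := hasDerivAt_eval p i x
  have hB := hasDerivAt_eval Np i x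
  have hBf : (fun t => eval (Function.update x i t) Np)
      = fun t => Nf (Function.update x i t) := funext fun t => eval_Np _
  rw [hBf] at hB
  have hpow := hB.pow M
  simp only [Function.update_eq_self] at hpow
  have hinv := hpow.inv (by
    simp only [Pi.pow_apply, Function.update_eq_self]; exact pow_ne_zero M hN)
  have hmul := hA.mul hinv
  have hd : pd i (fun y => eval y p * ((Nf y)^M)⁻¹) x
      = eval x (pderiv i p) * ((Nf x)^M)⁻¹
        + eval x p * (-((M : ℂ) * Nf x ^ (M-1) * eval x (pderiv i Np)) / (Nf x ^ M) ^ 2) := by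
    rw [pd]
    have := hmul.deriv
    simp only [Pi.pow_apply, Pi.inv_apply, Function.update_eq_self] at this
    exact this
  rw [hd, Rnext]
  simp only [map_sub, map_mul, map_natCast, eval_Np]
  cases M with
  | zero => simp; field_simp
  | succ m =>
    have h1 : m + 1 - 1 = m := rfl
    rw [h1]
    field_simp
    ring

lemma continuous_Nf_update (x : Fin 4 → ℂ) (i : Fin 4) :
    Continuous fun t => Nf (Function.update x i t) := by
  have h : ∀ k : Fin 4, Continuous fun t : ℂ => Function.update x i t k := by
    intro k
    simp only [Function.update_apply]
    rcases eq_or_ne k i with h | h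
    · simp only [h, if_pos rfl]; exact continuous_id
    · simp only [if_neg h]; exact continuous_const
  exact (((h 0).mul (h 3)).sub ((h 1).mul (h 2)))

lemma eventually_ne_Nf (x : Fin 4 → ℂ) (i : Fin 4) (h : Nf x ≠ 0) :
    ∀ᶠ t in nhds (x i), Nf (Function.update x i t) ≠ 0 := by
  have hc : ContinuousAt (fun t => Nf (Function.update x i t)) (x i) :=
    (continuous_Nf_update x i).continuousAt
  refine hc.eventually_ne ?_
  rw [Function.update_eq_self]; exact h

lemma pd_congr (i : Fin 4) (F G : (Fin 4 → ℂ) → ℂ) (x : Fin 4 → ℂ)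
    (h : ∀ᶠ t in nhds (x i), F (Function.update x i t) = G (Function.update x i t)) :
    pd i F x = pd i G x :=
  Filter.EventuallyEq.deriv_eq h

end TFunAux

open TFunAux in
/-- For invertible `Z` (entries `x 0 = z₁₁, x 1 = z₁₂, x 2 = z₂₁, x 3 = z₂₂`,
`N(x) = x 0 · x 3 - x 1 · x 2`), the function `t^l_{n,m}(Z⁻¹)·N(Z)⁻¹` equals
`N(Z)^{-(2l+1)}` times a harmonic polynomial; in particular it is annihilated
by `□ = ∂²/∂z₁₁∂z₂₂ - ∂²/∂z₁₂∂z₂₁` on the open set `N(Z) ≠ 0`. -/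
theorem tFun_inv_harmonic (a b j : ℕ) (hj : j ≤ a + b) :
    (∃ h : MvPolynomial (Fin 4) ℂ,
      pderiv 0 (pderiv 3 h) - pderiv 1 (pderiv 2 h) = 0 ∧
      ∀ Z : Matrix (Fin 2) (Fin 2) ℂ, Z.det ≠ 0 →
        tFun a b j (Z⁻¹ 0 0) (Z⁻¹ 0 1) (Z⁻¹ 1 0) (Z⁻¹ 1 1) * (Z.det)⁻¹
          = MvPolynomial.eval ![Z 0 0, Z 0 1, Z 1 0, Z 1 1] h * ((Z.det) ^ (a + b + 1))⁻¹) ∧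
    (∀ x : Fin 4 → ℂ, x 0 * x 3 - x 1 * x 2 ≠ 0 →
      (pd 0 (pd 3 (fun y =>
          tFun a b j ((y 3) / (y 0 * y 3 - y 1 * y 2)) (-(y 1) / (y 0 * y 3 - y 1 * y 2))
            (-(y 2) / (y 0 * y 3 - y 1 * y 2)) ((y 0) / (y 0 * y 3 - y 1 * y 2)) *
            (y 0 * y 3 - y 1 * y 2)⁻¹))
        - pd 1 (pd 2 (fun y =>
          tFun a b j ((y 3) / (y 0 * y 3 - y 1 * y 2)) (-(y 1) / (y 0 * y 3 - y 1 * y 2))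
            (-(y 2) / (y 0 * y 3 - y 1 * y 2)) ((y 0) / (y 0 * y 3 - y 1 * y 2)) *
            (y 0 * y 3 - y 1 * y 2)⁻¹))) x = 0) := by
  set M : ℕ := a + b + 1 with hM
  set f : (Fin 4 → ℂ) → ℂ := fun y =>
    tFun a b j ((y 3) / (y 0 * y 3 - y 1 * y 2)) (-(y 1) / (y 0 * y 3 - y 1 * y 2))
      (-(y 2) / (y 0 * y 3 - y 1 * y 2)) ((y 0) / (y 0 * y 3 - y 1 * y 2)) *
      (y 0 * y 3 - y 1 * y 2)⁻¹ with hf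
  have hfR : ∀ y : Fin 4 → ℂ, Nf y ≠ 0 → f y = eval y (hP a b j) * ((Nf y)^M)⁻¹ := by
    intro y hy
    exact core a b j y hy
  constructor
  · refine ⟨hP a b j, box_hP a b j, ?_⟩
    intro Z hZ
    have hdet : Z.det = Z 0 0 * Z 1 1 - Z 0 1 * Z 1 0 := Matrix.det_fin_two Z
    have hinv : Z⁻¹ 0 0 = Z 1 1 / Z.det ∧ Z⁻¹ 0 1 = -(Z 0 1) / Z.det
        ∧ Z⁻¹ 1 0 = -(Z 1 0) / Z.det ∧ Z⁻¹ 1 1 = Z 0 0 / Z.det := by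
      rw [Matrix.inv_def, Matrix.adjugate_fin_two]
      simp [Ring.inverse_eq_inv', div_eq_inv_mul]
    set y : Fin 4 → ℂ := ![Z 0 0, Z 0 1, Z 1 0, Z 1 1] with hy
    have hy0 : y 0 = Z 0 0 := rfl
    have hy1 : y 1 = Z 0 1 := rfl
    have hy2 : y 2 = Z 1 0 := rfl
    have hy3 : y 3 = Z 1 1 := rfl
    have hNy : y 0 * y 3 - y 1 * y 2 = Z.det := by
      rw [hy0, hy1, hy2, hy3, hdet]
    have hNy' : y 0 * y 3 - y 1 * y 2 ≠ 0 := by rw [hNy]; exact hZ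
    have := core a b j y hNy'
    rw [hNy] at this
    rw [hinv.1, hinv.2.1, hinv.2.2.1, hinv.2.2.2]
    rw [← hy0, ← hy1, ← hy2, ← hy3]
    exact this
  · intro x hN
    have hNx : Nf x ≠ 0 := hN
    -- first branch
    have step3 : ∀ y : Fin 4 → ℂ, Nf y ≠ 0 →
        pd 3 f y = eval y (Rnext (hP a b j) M 3) * ((Nf y)^(M+1))⁻¹ := by
      intro y hy
      rw [pd_congr 3 f (fun z => eval z (hP a b j) * ((Nf z)^M)⁻¹) y
        ((eventually_ne_Nf y 3 hy).mono fun t ht => hfR _ ht)]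
      exact pd_R _ M 3 y hy
    have step03 : pd 0 (pd 3 f) x
        = eval x (Rnext (Rnext (hP a b j) M 3) (M+1) 0) * ((Nf x)^(M+1+1))⁻¹ := by
      rw [pd_congr 0 (pd 3 f) (fun z => eval z (Rnext (hP a b j) M 3) * ((Nf z)^(M+1))⁻¹) x
        ((eventually_ne_Nf x 0 hNx).mono fun t ht => step3 _ ht)]
      exact pd_R _ (M+1) 0 x hNx
    have step2 : ∀ y : Fin 4 → ℂ, Nf y ≠ 0 →
        pd 2 f y = eval y (Rnext (hP a b j) M 2) * ((Nf y)^(M+1))⁻¹ := by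
      intro y hy
      rw [pd_congr 2 f (fun z => eval z (hP a b j) * ((Nf z)^M)⁻¹) y
        ((eventually_ne_Nf y 2 hy).mono fun t ht => hfR _ ht)]
      exact pd_R _ M 2 y hy
    have step12 : pd 1 (pd 2 f) x
        = eval x (Rnext (Rnext (hP a b j) M 2) (M+1) 1) * ((Nf x)^(M+1+1))⁻¹ := by
      rw [pd_congr 1 (pd 2 f) (fun z => eval z (Rnext (hP a b j) M 2) * ((Nf z)^(M+1))⁻¹) x
        ((eventually_ne_Nf x 1 hNx).mono fun t ht => step2 _ ht)]
      exact pd_R _ (M+1) 1 x hNx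
    rw [Pi.sub_apply, step03, step12, ← sub_mul, ← map_sub]
    have hkey := key a b j
    rw [hM, hkey]
    simp
end
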